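/- arXiv:1201.0533 — 3 statements merged into one kernel-verified Lean document; each statement's English description precedes it below -/
import Mathlib

section
/- Let X be a real-valued random variable with a symmetric distribution around zero, supported on [−d, d] for some d > 0, with E[X²] ≤ γd² for some γ ∈ [0,1]. Then for every λ ∈ ℝ, E[exp(λX)] ≤ 1 + γ(cosh(λd) − 1). Moreover, equality holds for every λ ∈ ℝ when X has the distribution P(X = d) = P(X = −d) = γ/2, P(X = 0) = 1 − γ. -/
open MeasureTheory ProbabilityTheory Filter Set

/-! The bound is the termwise comparison of the even power series of `cosh`: for `s² = r t²`
with `r ∈ [0, 1]` one has `s^(2n) = rⁿ t^(2n) ≤ r t^(2n)` when `n ≥ 1`, so `cosh s - 1` is at most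
`r (cosh t - 1)`. With `s = λX`, `t = λd` and `r = X²/d²`, taking expectations gives
`E[cosh(λX)] ≤ 1 + E[X²]/d² · (cosh(λd) - 1)`, and symmetry of `X` turns `E[exp(λX)]` into
`E[cosh(λX)]`. The three-point law puts all the mass where `r ∈ {0, 1}`, so every comparison is
an equality there. -/

/-- The three-point symmetric law on `ℝ`: mass `γ/2` at `d`, mass `γ/2` at `−d`,
and mass `1 − γ` at `0`. -/
noncomputable def threePointLaw (d γ : ℝ) : Measure ℝ :=
  ENNReal.ofReal (γ / 2) • Measure.dirac d + ENNReal.ofReal (γ / 2) • Measure.dirac (-d)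
    + ENNReal.ofReal (1 - γ) • Measure.dirac 0

namespace Real

theorem cosh_sub_one_le_mul_of_sq_eq {r s t : ℝ} (hr₀ : 0 ≤ r) (hr₁ : r ≤ 1)
    (hst : s ^ 2 = r * t ^ 2) : cosh s - 1 ≤ r * (cosh t - 1) := by
  have hs : HasSum (fun n => r ^ n * (t ^ 2) ^ n / (2 * n).factorial) (cosh s) := by
    simpa only [pow_mul, hst, mul_pow] using hasSum_cosh s
  have hmix : HasSum (fun n => (1 - r) * ((0 : ℝ) ^ 2) ^ n / (2 * n).factorial
      + r * ((t ^ 2) ^ n / (2 * n).factorial)) ((1 - r) * cosh 0 + r * cosh t) := by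
    refine ((hasSum_cosh 0).mul_left (1 - r)).add ((hasSum_cosh t).mul_left r) |>.congr_fun ?_
    intro n
    simp only [pow_mul, mul_div_assoc]
  have hterm : ∀ n : ℕ, r ^ n * (t ^ 2) ^ n / (2 * n).factorial
      ≤ (1 - r) * ((0 : ℝ) ^ 2) ^ n / (2 * n).factorial
        + r * ((t ^ 2) ^ n / (2 * n).factorial) := by
    rintro (_ | n)
    · simp
    · have hrn : r ^ (n + 1) ≤ r := pow_le_of_le_one hr₀ hr₁ n.succ_ne_zero
      have : 0 ≤ (t ^ 2) ^ (n + 1) / (2 * (n + 1)).factorial := by positivity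
      rw [mul_div_assoc]
      simpa using mul_le_mul_of_nonneg_right hrn this
  have := hasSum_le hterm hs hmix
  rw [cosh_zero] at this
  linarith

theorem cosh_mul_le_one_add_sq_div_sq_mul {d x : ℝ} (hd : 0 < d) (hx : |x| ≤ d) (l : ℝ) :
    cosh (l * x) ≤ 1 + x ^ 2 / d ^ 2 * (cosh (l * d) - 1) := by
  have hx2 : x ^ 2 ≤ d ^ 2 := sq_le_sq' (abs_le.mp hx).1 (abs_le.mp hx).2
  have hr₁ : x ^ 2 / d ^ 2 ≤ 1 := div_le_one_of_le₀ hx2 (by positivity)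
  have hst : (l * x) ^ 2 = x ^ 2 / d ^ 2 * (l * d) ^ 2 := by field_simp
  linarith [cosh_sub_one_le_mul_of_sq_eq (by positivity) hr₁ hst]

end Real

section

variable {Ω : Type*} {m0 : MeasurableSpace Ω} {μ : Measure Ω} {X : Ω → ℝ}

theorem integral_comp_neg_eq_of_map_eq (hX : AEMeasurable X μ)
    (hsymm : μ.map X = μ.map (fun ω => -X ω)) {f : ℝ → ℝ} (hf : Continuous f) :
    ∫ ω, f (-X ω) ∂μ = ∫ ω, f (X ω) ∂μ := by
  have hmap := integral_map (φ := fun ω => -X ω) hX.neg hf.aestronglyMeasurable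
  rw [← hmap, ← hsymm, integral_map hX hf.aestronglyMeasurable]

theorem integral_exp_mul_eq_integral_cosh_mul (hX : AEMeasurable X μ)
    (hsymm : μ.map X = μ.map (fun ω => -X ω)) {l : ℝ}
    (hint : ∀ c, Integrable (fun ω => Real.exp (c * X ω)) μ) :
    ∫ ω, Real.exp (l * X ω) ∂μ = ∫ ω, Real.cosh (l * X ω) ∂μ := by
  have hneg : ∫ ω, Real.exp (-l * X ω) ∂μ = ∫ ω, Real.exp (l * X ω) ∂μ := by
    simpa only [neg_mul, mul_neg] using
      integral_comp_neg_eq_of_map_eq hX hsymm (f := fun x => Real.exp (l * x)) (by fun_prop)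
  simp only [Real.cosh_eq, neg_mul_eq_neg_mul]
  rw [integral_div, integral_add (hint l) (hint (-l)), hneg]
  ring

theorem integrable_of_ae_abs_le [IsFiniteMeasure μ] (hX : AEMeasurable X μ) {d : ℝ}
    (hbdd : ∀ᵐ ω ∂μ, |X ω| ≤ d) {f : ℝ → ℝ} (hf : Continuous f) :
    Integrable (fun ω => f (X ω)) μ := by
  obtain ⟨C, hC⟩ := (isCompact_Icc (a := -d) (b := d)).exists_bound_of_continuousOn hf.continuousOn
  refine Integrable.of_bound (hf.measurable.comp_aemeasurable hX).aestronglyMeasurable C ?_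
  filter_upwards [hbdd] with ω hω
  exact hC _ (abs_le.mp hω)

end

theorem integral_threePointLaw {d γ : ℝ} (hγ : γ ∈ Icc (0 : ℝ) 1) (f : ℝ → ℝ) :
    ∫ x, f x ∂threePointLaw d γ = γ / 2 * f d + γ / 2 * f (-d) + (1 - γ) * f 0 := by
  have hdirac (a : ℝ) : Integrable f (Measure.dirac a) := integrable_dirac enorm_lt_top
  have hsmul (c a : ℝ) : Integrable f (ENNReal.ofReal c • Measure.dirac a) :=
    (hdirac a).smul_measure ENNReal.ofReal_ne_top
  rw [threePointLaw, integral_add_measure ((hsmul _ _).add_measure (hsmul _ _)) (hsmul _ _),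
    integral_add_measure (hsmul _ _) (hsmul _ _)]
  simp only [integral_smul_measure, integral_dirac, smul_eq_mul]
  rw [ENNReal.toReal_ofReal (by linarith [hγ.1]), ENNReal.toReal_ofReal (by linarith [hγ.2])]

/-- Corollary 2 (refined Bennett inequality for symmetric distributions): if `X` is
symmetric around zero, `|X| ≤ d` a.s., and `E[X²] ≤ γ d²`, then for every `λ ∈ ℝ`,
`E[exp(λX)] ≤ 1 + γ(cosh(λd) − 1)`; moreover, equality holds for every `λ` when `X`
has the three-point law. -/
theorem refined_bennett_symmetric
    {Ω : Type*} {m0 : MeasurableSpace Ω} {μ : Measure Ω} [IsProbabilityMeasure μ]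
    {X : Ω → ℝ} (hmeas : Measurable X)
    (hsymm : Measure.map X μ = Measure.map (fun ω => -X ω) μ)
    {d γ : ℝ} (hd : 0 < d) (hγ : γ ∈ Set.Icc (0 : ℝ) 1)
    (hbdd : ∀ᵐ ω ∂μ, |X ω| ≤ d)
    (hvar : ∫ ω, (X ω) ^ 2 ∂μ ≤ γ * d ^ 2) :
    (∀ l : ℝ, ∫ ω, Real.exp (l * X ω) ∂μ ≤ 1 + γ * (Real.cosh (l * d) - 1)) ∧
    (∀ (Ω' : Type) (m' : MeasurableSpace Ω') (μ' : Measure Ω'),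
      IsProbabilityMeasure μ' → ∀ Y : Ω' → ℝ, Measurable Y →
      Measure.map Y μ' = threePointLaw d γ →
      ∀ l : ℝ, ∫ ω, Real.exp (l * Y ω) ∂μ' = 1 + γ * (Real.cosh (l * d) - 1)) := by
  have hint (f : ℝ → ℝ) (hf : Continuous f) : Integrable (fun ω => f (X ω)) μ :=
    integrable_of_ae_abs_le hmeas.aemeasurable hbdd hf
  refine ⟨fun l => ?_, fun Ω' _ μ' _ Y hY hlaw l => ?_⟩
  · have hmoment : (∫ ω, X ω ^ 2 ∂μ) / d ^ 2 ≤ γ := (div_le_iff₀ (by positivity)).mpr hvar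
    calc ∫ ω, Real.exp (l * X ω) ∂μ
        = ∫ ω, Real.cosh (l * X ω) ∂μ :=
          integral_exp_mul_eq_integral_cosh_mul hmeas.aemeasurable hsymm
            fun c => hint (fun x => Real.exp (c * x)) (by fun_prop)
      _ ≤ ∫ ω, (1 + X ω ^ 2 / d ^ 2 * (Real.cosh (l * d) - 1)) ∂μ := by
          refine integral_mono_ae (hint (fun x => Real.cosh (l * x)) (by fun_prop))
            (hint (fun x => 1 + x ^ 2 / d ^ 2 * (Real.cosh (l * d) - 1)) (by fun_prop)) ?_
          filter_upwards [hbdd] with ω hω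
          exact Real.cosh_mul_le_one_add_sq_div_sq_mul hd hω l
      _ = 1 + (∫ ω, X ω ^ 2 ∂μ) / d ^ 2 * (Real.cosh (l * d) - 1) := by
          rw [integral_add (integrable_const 1) (hint (fun x => x ^ 2 / d ^ 2 * _) (by fun_prop)),
            integral_mul_const, integral_div, integral_const, probReal_univ, one_smul]
      _ ≤ 1 + γ * (Real.cosh (l * d) - 1) := by
          gcongr
          linarith [Real.one_le_cosh (l * d)]
  · have hmap := integral_map (f := fun x => Real.exp (l * x)) (hY.aemeasurable (μ := μ'))
      (by fun_prop)
    rw [← hmap, hlaw, integral_threePointLaw hγ, Real.cosh_eq]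
    simp only [mul_zero, Real.exp_zero, mul_neg]
    ring
end

section
/- Let {X_k, F_k}_{k≥0} be a discrete-time real-valued conditionally symmetric martingale with jumps ξ_k = X_k − X_{k−1} satisfying, almost surely for every k ≥ 1, |ξ_k| ≤ d and E[ξ_k² | F_{k−1}] ≤ σ², for some d, σ > 0. Set γ = σ²/d². Then for every t ∈ ℝ and n ≥ 1, E[ exp( t Σ_{k=1}^n ξ_k ) ] ≤ ( 1 + γ(cosh(td) − 1) )^n. -/
/-!
Conditional symmetry makes `E[exp(t ξ_k) | F_{k-1}] = E[cosh(t ξ_k) | F_{k-1}]`. Comparing the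
power series of `cosh` term by term gives `cosh(t x) ≤ 1 + (x/d)² (cosh(t d) - 1)` for `|x| ≤ d`,
so the conditional variance bound yields `E[exp(t ξ_k) | F_{k-1}] ≤ 1 + γ (cosh(t d) - 1)`.
Peeling off one jump at a time with the tower property gives the `n`-th power.
-/

open MeasureTheory

open Nat in
lemma Real.hasSum_cosh_sub_one (r : ℝ) :
    HasSum (fun n => r ^ (2 * (n + 1)) / (2 * (n + 1))!) (Real.cosh r - 1) := by
  simpa using (hasSum_nat_add_iff' 1).2 (Real.hasSum_cosh r)

lemma pow_two_mul_succ_le {x d : ℝ} (hd : 0 < d) (hx : |x| ≤ d) (t : ℝ) (n : ℕ) :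
    (t * x) ^ (2 * (n + 1)) ≤ x ^ 2 / d ^ 2 * (t * d) ^ (2 * (n + 1)) := by
  have hsq : x ^ 2 ≤ d ^ 2 := sq_le_sq' (abs_le.1 hx).1 (abs_le.1 hx).2
  calc (t * x) ^ (2 * (n + 1)) = (t ^ 2) ^ (n + 1) * x ^ 2 * (x ^ 2) ^ n := by ring
    _ ≤ (t ^ 2) ^ (n + 1) * x ^ 2 * (d ^ 2) ^ n := by gcongr
    _ = x ^ 2 / d ^ 2 * (t * d) ^ (2 * (n + 1)) := by field_simp; ring

lemma Real.cosh_mul_le_of_abs_le {x d : ℝ} (hd : 0 < d) (hx : |x| ≤ d) (t : ℝ) :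
    Real.cosh (t * x) ≤ 1 + x ^ 2 / d ^ 2 * (Real.cosh (t * d) - 1) := by
  have hsum : Real.cosh (t * x) - 1 ≤ x ^ 2 / d ^ 2 * (Real.cosh (t * d) - 1) := by
    refine hasSum_le (fun n => ?_) (Real.hasSum_cosh_sub_one (t * x))
      ((Real.hasSum_cosh_sub_one (t * d)).mul_left (x ^ 2 / d ^ 2))
    rw [mul_div_assoc']
    gcongr
    exact pow_two_mul_succ_le hd hx t n
  linarith

lemma Finset.sum_Icc_sub_pred {G : Type*} [AddCommGroup G] (a : ℕ → G) (n : ℕ) :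
    ∑ k ∈ Finset.Icc 1 n, (a k - a (k - 1)) = a n - a 0 := by
  induction n with
  | zero => simp
  | succ n ih => rw [Finset.sum_Icc_succ_top (by omega), ih]; simp

section
variable {Ω : Type*} {m m0 : MeasurableSpace Ω} {μ : Measure Ω}

lemma integrable_exp_mul_of_abs_le [IsFiniteMeasure μ] {Y : Ω → ℝ}
    (hY : AEStronglyMeasurable Y μ) {C : ℝ} (hC : ∀ᵐ ω ∂μ, |Y ω| ≤ C) (t : ℝ) :
    Integrable (fun ω => Real.exp (t * Y ω)) μ := by
  refine .of_bound (Real.continuous_exp.comp_aestronglyMeasurable (hY.const_mul t))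
    (Real.exp (|t| * C)) ?_
  filter_upwards [hC] with ω hω
  rw [Real.norm_eq_abs, Real.abs_exp, Real.exp_le_exp]
  calc t * Y ω ≤ |t| * |Y ω| := abs_mul t (Y ω) ▸ le_abs_self _
    _ ≤ |t| * C := by gcongr

lemma condExp_ae_eq_condExp_midpoint {f g : Ω → ℝ} (hf : Integrable f μ) (hg : Integrable g μ)
    (hfg : μ[f | m] =ᵐ[μ] μ[g | m]) : μ[f | m] =ᵐ[μ] μ[(2 : ℝ)⁻¹ • (f + g) | m] := by
  filter_upwards [condExp_smul (2 : ℝ)⁻¹ (f + g) m, condExp_add hf hg m, hfg] with ω h1 h2 h3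
  simp only [h1, Pi.smul_apply, h2, Pi.add_apply, ← h3, smul_eq_mul]
  ring

lemma condExp_cosh_mul_le [IsFiniteMeasure μ] (hm : m ≤ m0) {ξ : Ω → ℝ}
    (hξ : AEStronglyMeasurable ξ μ) {d σ : ℝ} (hd : 0 < d) (hbdd : ∀ᵐ ω ∂μ, |ξ ω| ≤ d)
    (hvar : ∀ᵐ ω ∂μ, (μ[fun ω => ξ ω ^ 2 | m]) ω ≤ σ ^ 2) (t : ℝ) :
    μ[fun ω => Real.cosh (t * ξ ω) | m]
      ≤ᵐ[μ] fun _ => 1 + σ ^ 2 / d ^ 2 * (Real.cosh (t * d) - 1) := by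
  set c := (Real.cosh (t * d) - 1) / d ^ 2
  have hc : 0 ≤ c := div_nonneg (sub_nonneg.2 (Real.one_le_cosh _)) (by positivity)
  have hpoint : ∀ᵐ ω ∂μ, Real.cosh (t * ξ ω) ≤ 1 + c * ξ ω ^ 2 := by
    filter_upwards [hbdd] with ω hω
    have := Real.cosh_mul_le_of_abs_le hd hω t
    rwa [div_mul_comm] at this
  have hsq : Integrable (fun ω => ξ ω ^ 2) μ := by
    refine .of_bound (hξ.pow 2) (d ^ 2) ?_
    filter_upwards [hbdd] with ω hω
    rw [Real.norm_eq_abs, abs_pow]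
    exact pow_le_pow_left₀ (abs_nonneg _) hω 2
  have hupper : Integrable (fun ω => 1 + c * ξ ω ^ 2) μ :=
    (integrable_const 1).add (hsq.const_mul c)
  have hcosh : Integrable (fun ω => Real.cosh (t * ξ ω)) μ := by
    refine hupper.mono' (Real.continuous_cosh.comp_aestronglyMeasurable (hξ.const_mul t)) ?_
    filter_upwards [hpoint] with ω hω
    rwa [Real.norm_eq_abs, abs_of_pos (Real.cosh_pos _)]
  have hlin : μ[fun ω => 1 + c * ξ ω ^ 2 | m]
      =ᵐ[μ] fun ω => 1 + c * (μ[fun ω => ξ ω ^ 2 | m]) ω := by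
    change μ[(fun _ => (1 : ℝ)) + c • fun ω => ξ ω ^ 2 | m] =ᵐ[μ] _
    filter_upwards [condExp_add (integrable_const (1 : ℝ)) (hsq.smul c) m,
      condExp_smul c (fun ω => ξ ω ^ 2) m] with ω h1 h2
    simp [h1, h2, condExp_const hm]
  calc μ[fun ω => Real.cosh (t * ξ ω) | m]
      ≤ᵐ[μ] μ[fun ω => 1 + c * ξ ω ^ 2 | m] := condExp_mono hcosh hupper hpoint
    _ =ᵐ[μ] fun ω => 1 + c * (μ[fun ω => ξ ω ^ 2 | m]) ω := hlin
    _ ≤ᵐ[μ] fun _ => 1 + σ ^ 2 / d ^ 2 * (Real.cosh (t * d) - 1) := by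
      filter_upwards [hvar] with ω hω
      calc 1 + c * (μ[fun ω => ξ ω ^ 2 | m]) ω ≤ 1 + c * σ ^ 2 := by gcongr
        _ = 1 + σ ^ 2 / d ^ 2 * (Real.cosh (t * d) - 1) := by ring

lemma condExp_exp_mul_le_of_symm [IsFiniteMeasure μ] (hm : m ≤ m0) {ξ : Ω → ℝ}
    (hξ : AEStronglyMeasurable ξ μ) {d σ t : ℝ}
    (hsymm : μ[fun ω => Real.exp (t * ξ ω) | m] =ᵐ[μ] μ[fun ω => Real.exp (t * -ξ ω) | m])
    (hd : 0 < d) (hbdd : ∀ᵐ ω ∂μ, |ξ ω| ≤ d)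
    (hvar : ∀ᵐ ω ∂μ, (μ[fun ω => ξ ω ^ 2 | m]) ω ≤ σ ^ 2) :
    μ[fun ω => Real.exp (t * ξ ω) | m]
      ≤ᵐ[μ] fun _ => 1 + σ ^ 2 / d ^ 2 * (Real.cosh (t * d) - 1) := by
  have hcosh : (fun ω => Real.cosh (t * ξ ω))
      = (2 : ℝ)⁻¹ • ((fun ω => Real.exp (t * ξ ω)) + fun ω => Real.exp (t * -ξ ω)) := by
    ext ω
    simp [Real.cosh_eq]
    ring
  have hmid := condExp_ae_eq_condExp_midpoint (g := fun ω => Real.exp (t * -ξ ω))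
    (integrable_exp_mul_of_abs_le hξ hbdd t)
    (integrable_exp_mul_of_abs_le hξ.neg (by simpa using hbdd) t) hsymm
  rw [← hcosh] at hmid
  exact hmid.trans_le (condExp_cosh_mul_le hm hξ hd hbdd hvar t)

lemma integral_mul_le_of_condExp_le [IsFiniteMeasure μ] (hm : m ≤ m0) {f g : Ω → ℝ} {B : ℝ}
    (hf : StronglyMeasurable[m] f) (hf0 : 0 ≤ f) (hfi : Integrable f μ) (hg : Integrable g μ)
    (hfg : Integrable (f * g) μ) (hgB : μ[g | m] ≤ᵐ[μ] fun _ => B) :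
    ∫ ω, (f * g) ω ∂μ ≤ (∫ ω, f ω ∂μ) * B := by
  have hpull := condExp_mul_of_stronglyMeasurable_left hf hfg hg
  calc ∫ ω, (f * g) ω ∂μ = ∫ ω, (μ[f * g | m]) ω ∂μ := (integral_condExp hm).symm
    _ = ∫ ω, (f * μ[g | m]) ω ∂μ := integral_congr_ae hpull
    _ ≤ ∫ ω, f ω * B ∂μ := by
      refine integral_mono_ae (integrable_condExp.congr hpull) (hfi.mul_const B) ?_
      filter_upwards [hgB] with ω h
      exact mul_le_mul_of_nonneg_left h (hf0 ω)
    _ = (∫ ω, f ω ∂μ) * B := integral_mul_const B f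

lemma integral_exp_mul_sub_le_pow [IsProbabilityMeasure μ] {F : Filtration ℕ m0}
    {X : ℕ → Ω → ℝ} (hX : StronglyAdapted F X) {d t B : ℝ}
    (hbdd : ∀ k, ∀ᵐ ω ∂μ, |X (k + 1) ω - X k ω| ≤ d) (hB : 0 ≤ B)
    (hstep : ∀ k, μ[fun ω => Real.exp (t * (X (k + 1) ω - X k ω)) | F k] ≤ᵐ[μ] fun _ => B)
    (n : ℕ) : ∫ ω, Real.exp (t * (X n ω - X 0 ω)) ∂μ ≤ B ^ n := by
  have hXm : ∀ k, StronglyMeasurable[m0] (X k) := fun k => (hX k).mono (F.le k)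
  have hint : ∀ N, Integrable (fun ω => Real.exp (t * (X N ω - X 0 ω))) μ := by
    intro N
    refine integrable_exp_mul_of_abs_le ((hXm N).sub (hXm 0)).aestronglyMeasurable (C := N * d)
      ?_ t
    filter_upwards [ae_all_iff.2 hbdd] with ω hω
    have := dist_le_range_sum_of_dist_le (f := fun k => X k ω) N fun {k} _ => by
      simpa [Real.dist_eq, abs_sub_comm] using hω k
    simpa [Real.dist_eq, abs_sub_comm] using this
  induction n with
  | zero => simp
  | succ N ih =>
    have hf : StronglyMeasurable[F N] fun ω => Real.exp (t * (X N ω - X 0 ω)) :=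
      Real.continuous_exp.comp_stronglyMeasurable
        (((hX N).sub ((hX 0).mono (F.mono (Nat.zero_le N)))).const_mul t)
    have hsplit : (fun ω => Real.exp (t * (X (N + 1) ω - X 0 ω)))
        = (fun ω => Real.exp (t * (X N ω - X 0 ω)))
          * fun ω => Real.exp (t * (X (N + 1) ω - X N ω)) := by
      ext ω
      rw [Pi.mul_apply, ← Real.exp_add]
      ring_nf
    calc ∫ ω, Real.exp (t * (X (N + 1) ω - X 0 ω)) ∂μ
        ≤ (∫ ω, Real.exp (t * (X N ω - X 0 ω)) ∂μ) * B := by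
          rw [hsplit]
          exact integral_mul_le_of_condExp_le (F.le N) hf (fun ω => (Real.exp_pos _).le) (hint N)
            (integrable_exp_mul_of_abs_le ((hXm (N + 1)).sub (hXm N)).aestronglyMeasurable
              (hbdd N) t) (hsplit ▸ hint (N + 1)) (hstep N)
      _ ≤ B ^ N * B := by gcongr
      _ = B ^ (N + 1) := (pow_succ B N).symm
end

theorem conditionally_symmetric_mgf_bound_general
    {Ω : Type*} {m0 : MeasurableSpace Ω} {μ : Measure Ω} [IsProbabilityMeasure μ]
    {F : Filtration ℕ m0} {X : ℕ → Ω → ℝ}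
    (hmart : Martingale X F μ)
    (hsymm : ∀ k : ℕ, 1 ≤ k → ∀ g : ℝ → ℝ, Measurable g →
      μ[fun ω => g (X k ω - X (k - 1) ω) | F (k - 1)]
        =ᵐ[μ] μ[fun ω => g (-(X k ω - X (k - 1) ω)) | F (k - 1)])
    {d σ : ℝ} (hd : 0 < d)
    (hbdd : ∀ k : ℕ, 1 ≤ k → ∀ᵐ ω ∂μ, |X k ω - X (k - 1) ω| ≤ d)
    (hvar : ∀ k : ℕ, 1 ≤ k → ∀ᵐ ω ∂μ,
      (μ[fun ω => (X k ω - X (k - 1) ω) ^ 2 | F (k - 1)]) ω ≤ σ ^ 2)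
    (t : ℝ) (n : ℕ) :
    ∫ ω, Real.exp (t * ∑ k ∈ Finset.Icc 1 n, (X k ω - X (k - 1) ω)) ∂μ
      ≤ (1 + (σ ^ 2 / d ^ 2) * (Real.cosh (t * d) - 1)) ^ n := by
  have hB : 0 ≤ 1 + σ ^ 2 / d ^ 2 * (Real.cosh (t * d) - 1) :=
    add_nonneg zero_le_one (mul_nonneg (by positivity) (sub_nonneg.2 (Real.one_le_cosh _)))
  simp_rw [Finset.sum_Icc_sub_pred]
  refine integral_exp_mul_sub_le_pow hmart.stronglyAdapted (fun k => hbdd (k + 1) le_add_self)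
    hB (fun k => ?_) n
  have hjump : StronglyMeasurable[m0] fun ω => X (k + 1) ω - X k ω :=
    ((hmart.stronglyAdapted _).mono (F.le _)).sub ((hmart.stronglyAdapted _).mono (F.le _))
  exact condExp_exp_mul_le_of_symm (F.le k) hjump.aestronglyMeasurable
    (hsymm (k + 1) le_add_self _ (Real.measurable_exp.comp (measurable_const_mul t))) hd
    (hbdd (k + 1) le_add_self) (hvar (k + 1) le_add_self)

/-- Inequality (13): for a conditionally symmetric martingale with jumps bounded by `d` and
conditional variance at most `σ²`, setting `γ = σ²/d²`, for every `t ∈ ℝ`,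
`E[exp(t Σ_{k=1}^n ξ_k)] ≤ (1 + γ(cosh(td) − 1))^n`. -/
theorem conditionally_symmetric_mgf_bound
    {Ω : Type*} {m0 : MeasurableSpace Ω} {μ : Measure Ω} [IsProbabilityMeasure μ]
    {F : Filtration ℕ m0} {X : ℕ → Ω → ℝ}
    (hmart : Martingale X F μ)
    (hsymm : ∀ k : ℕ, 1 ≤ k → ∀ g : ℝ → ℝ, Measurable g →
      μ[fun ω => g (X k ω - X (k - 1) ω) | F (k - 1)]
        =ᵐ[μ] μ[fun ω => g (-(X k ω - X (k - 1) ω)) | F (k - 1)])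
    {d σ : ℝ} (hd : 0 < d) (hσ : 0 < σ)
    (hbdd : ∀ k : ℕ, 1 ≤ k → ∀ᵐ ω ∂μ, |X k ω - X (k - 1) ω| ≤ d)
    (hvar : ∀ k : ℕ, 1 ≤ k → ∀ᵐ ω ∂μ,
      (μ[fun ω => (X k ω - X (k - 1) ω) ^ 2 | F (k - 1)]) ω ≤ σ ^ 2)
    (t : ℝ) (n : ℕ) (hn : 1 ≤ n) :
    ∫ ω, Real.exp (t * ∑ k ∈ Finset.Icc 1 n, (X k ω - X (k - 1) ω)) ∂μ
      ≤ (1 + (σ ^ 2 / d ^ 2) * (Real.cosh (t * d) - 1)) ^ n :=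
  conditionally_symmetric_mgf_bound_general hmart hsymm hd hbdd hvar t n
end

section
/- For every fixed γ ∈ (0,1], lim_{δ→1⁻} E(γ,δ) = ln(2/γ), where the limit is taken as δ increases to 1 from below. -/
/-!
Write `t = e^x`. Then `1 + γ (cosh x - 1) = t ((1 - γ)/t + γ/2 + γ/(2t²))`, so
`E(γ,δ) = -(1 - δ) log t - log (γ/2 + o(1))` as `t → ∞`.
As `δ → 1⁻`, `t ≥ (1 - δ)^(-1/2) → ∞` while `(1 - δ) t ≤ 2/γ`, hence
`(1 - δ) log t ≤ (2/γ) (log t)/t → 0`.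
-/

open Filter Set

/-- The exponent `E(γ, δ)` from the paper: `E(γ,δ) = δ x − ln(1 + γ(cosh x − 1))` where
`x = ln( (δ(1−γ) + √(δ²(1−γ)² + γ²(1−δ²))) / (γ(1−δ)) )`. -/
noncomputable def Eexp (γ δ : ℝ) : ℝ :=
  δ * Real.log ((δ * (1 - γ) + Real.sqrt (δ ^ 2 * (1 - γ) ^ 2 + γ ^ 2 * (1 - δ ^ 2)))
      / (γ * (1 - δ)))
    - Real.log (1 + γ *
        (Real.cosh (Real.log ((δ * (1 - γ)
            + Real.sqrt (δ ^ 2 * (1 - γ) ^ 2 + γ ^ 2 * (1 - δ ^ 2))) / (γ * (1 - δ)))) - 1))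

open Real Topology

lemma tendsto_mul_log_of_mul_le {α : Type*} {l : Filter α} {s t : α → ℝ} {C : ℝ}
    (ht : Tendsto t l atTop) (hs : ∀ᶠ a in l, 0 ≤ s a ∧ s a * t a ≤ C) :
    Tendsto (fun a => s a * log (t a)) l (𝓝 0) := by
  have hC : Tendsto (fun a => C * (log (t a) / t a)) l (𝓝 0) := by
    simpa using (isLittleO_log_id_atTop.tendsto_div_nhds_zero.comp ht).const_mul C
  refine tendsto_of_tendsto_of_tendsto_of_le_of_le' tendsto_const_nhds hC ?_ ?_
  · filter_upwards [hs, ht.eventually_ge_atTop 1] with a ⟨hs0, _⟩ ht1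
    exact mul_nonneg hs0 (log_nonneg ht1)
  · filter_upwards [hs, ht.eventually_ge_atTop 1] with a ⟨_, hsC⟩ ht1
    calc s a * log (t a) = s a * t a * (log (t a) / t a) := by field_simp
      _ ≤ C * (log (t a) / t a) :=
        mul_le_mul_of_nonneg_right hsC (div_nonneg (log_nonneg ht1) (by linarith))

lemma tendsto_one_add_mul_cosh_log_sub_one_div_atTop (γ : ℝ) :
    Tendsto (fun t => (1 + γ * (cosh (log t) - 1)) / t) atTop (𝓝 (γ / 2)) := by
  have h : Tendsto (fun t : ℝ => (1 - γ) * t⁻¹ + γ / 2 + γ / 2 * t⁻¹ ^ 2) atTop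
      (𝓝 ((1 - γ) * 0 + γ / 2 + γ / 2 * 0 ^ 2)) :=
    ((tendsto_inv_atTop_zero.const_mul _).add_const _).add
      ((tendsto_inv_atTop_zero.pow 2).const_mul _)
  rw [mul_zero, zero_add, zero_pow two_ne_zero, mul_zero, add_zero] at h
  refine h.congr' ?_
  filter_upwards [eventually_gt_atTop 0] with t ht
  rw [cosh_log ht]
  field_simp
  ring

theorem tendsto_mul_log_sub_log_one_add_mul_cosh_log {α : Type*} {l : Filter α}
    {δ t : α → ℝ} {γ C : ℝ} (hγ : 0 < γ) (ht : Tendsto t l atTop)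
    (hδ : ∀ᶠ a in l, δ a ≤ 1 ∧ (1 - δ a) * t a ≤ C) :
    Tendsto (fun a => δ a * log (t a) - log (1 + γ * (cosh (log (t a)) - 1))) l
      (𝓝 (log (2 / γ))) := by
  have hlin : Tendsto (fun a => (1 - δ a) * log (t a)) l (𝓝 0) :=
    tendsto_mul_log_of_mul_le ht (hδ.mono fun a h => ⟨sub_nonneg.2 h.1, h.2⟩)
  have hratio : Tendsto (fun a => log ((1 + γ * (cosh (log (t a)) - 1)) / t a)) l
      (𝓝 (log (γ / 2))) :=
    ((continuousAt_log (by positivity)).tendsto.comp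
      (tendsto_one_add_mul_cosh_log_sub_one_div_atTop γ)).comp ht
  have hlim := hlin.neg.sub hratio
  rw [neg_zero, zero_sub, ← log_inv, inv_div] at hlim
  refine hlim.congr' ?_
  filter_upwards [ht.eventually_gt_atTop 0] with a ha
  have hnum : 0 < 1 + γ * (cosh (log (t a)) - 1) := by
    nlinarith [one_le_cosh (log (t a))]
  rw [log_div hnum.ne' ha.ne']
  ring

/-- `e^x` for the `x` in the definition of `Eexp`. -/
noncomputable def expX (γ δ : ℝ) : ℝ :=
  (δ * (1 - γ) + √(δ ^ 2 * (1 - γ) ^ 2 + γ ^ 2 * (1 - δ ^ 2))) / (γ * (1 - δ))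

section

variable {γ δ : ℝ}

lemma sqrt_inv_one_sub_le_expX (hγ0 : 0 < γ) (hγ1 : γ ≤ 1) (hδ0 : 0 ≤ δ) (hδ1 : δ < 1) :
    √((1 - δ)⁻¹) ≤ expX γ δ := by
  set D := δ ^ 2 * (1 - γ) ^ 2 + γ ^ 2 * (1 - δ ^ 2)
  have hnum : √D ≤ δ * (1 - γ) + √D := le_add_of_nonneg_left (by nlinarith)
  have hD : γ ^ 2 * (1 - δ) ≤ D := by nlinarith [mul_nonneg hδ0 (sub_nonneg.2 hδ1.le)]
  have hinv : (1 - δ)⁻¹ = γ ^ 2 * (1 - δ) / (γ * (1 - δ)) ^ 2 := by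
    field_simp [(sub_pos.2 hδ1).ne']
  refine sqrt_le_iff.2 ⟨div_nonneg ((sqrt_nonneg D).trans hnum) (by nlinarith), ?_⟩
  rw [hinv, expX, div_pow]
  gcongr
  calc γ ^ 2 * (1 - δ) ≤ D := hD
    _ = √D ^ 2 := (sq_sqrt (by nlinarith)).symm
    _ ≤ _ := pow_le_pow_left₀ (sqrt_nonneg D) hnum 2

lemma one_sub_mul_expX_le (hγ0 : 0 < γ) (hγ1 : γ ≤ 1) (hδ0 : 0 ≤ δ) (hδ1 : δ < 1) :
    (1 - δ) * expX γ δ ≤ 2 / γ := by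
  have hD : δ ^ 2 * (1 - γ) ^ 2 + γ ^ 2 * (1 - δ ^ 2) ≤ 1 := by
    nlinarith [mul_nonneg (sub_nonneg.2 (pow_le_one₀ (n := 2) hδ0 hδ1.le))
        (sub_nonneg.2 (pow_le_one₀ (n := 2) hγ0.le hγ1)),
      mul_nonneg (sq_nonneg δ) (mul_nonneg hγ0.le (by linarith : (0 : ℝ) ≤ 2 - γ))]
  have hnum : δ * (1 - γ) + √(δ ^ 2 * (1 - γ) ^ 2 + γ ^ 2 * (1 - δ ^ 2)) ≤ 2 := by
    nlinarith [sqrt_le_one.2 hD]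
  rw [expX, mul_div_assoc', mul_comm γ, ← div_div, mul_div_cancel_left₀ _ (sub_pos.2 hδ1).ne']
  gcongr

end

lemma tendsto_expX_atTop {γ : ℝ} (hγ0 : 0 < γ) (hγ1 : γ ≤ 1) :
    Tendsto (expX γ) (𝓝[<] 1) atTop := by
  have hsub : Tendsto (fun δ : ℝ => 1 - δ) (𝓝[<] 1) (𝓝[>] 0) := by
    have h := (map_subLeft_nhdsLT (c := (1 : ℝ)) (a := 1)).le
    rwa [sub_self] at h
  refine tendsto_atTop_mono' _ ?_ (tendsto_sqrt_atTop.comp (tendsto_inv_nhdsGT_zero.comp hsub))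
  filter_upwards [Ioo_mem_nhdsLT zero_lt_one] with δ ⟨hδ0, hδ1⟩
  exact sqrt_inv_one_sub_le_expX hγ0 hγ1 hδ0.le hδ1

/-- For every fixed `γ ∈ (0,1]`, `E(γ,δ) → ln(2/γ)` as `δ → 1⁻`. -/
theorem Eexp_tendsto_log_two_div (γ : ℝ) (hγ : γ ∈ Set.Ioc (0 : ℝ) 1) :
    Tendsto (fun δ => Eexp γ δ) (nhdsWithin 1 (Set.Iio 1)) (nhds (Real.log (2 / γ))) := by
  obtain ⟨hγ0, hγ1⟩ := hγ
  refine tendsto_mul_log_sub_log_one_add_mul_cosh_log (C := 2 / γ) hγ0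
    (tendsto_expX_atTop hγ0 hγ1) ?_
  filter_upwards [Ioo_mem_nhdsLT zero_lt_one] with δ ⟨hδ0, hδ1⟩
  exact ⟨hδ1.le, one_sub_mul_expX_le hγ0 hγ1 hδ0.le hδ1⟩
end
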